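/- arXiv:1510.01672 — 5 statements merged into one kernel-verified Lean document; each statement's English description precedes it below -/
import Mathlib

section
/- If A and B are positive semidefinite contractions on a complex inner product space, then the Hermitian operator (AB + BA)/2 satisfies (AB+BA)/2 ≥ -I/8, i.e., AB + BA + I/4 is positive semidefinite. -/
/-!
Completing the square gives
`a * b + b * a + 1/4 = (a + b - 1/2)² + (a - a²) + (b - b²)`.
The square of the self-adjoint element `a + b - 1/2` is nonnegative, and a positive contraction
satisfies `a² ≤ a`, since `a² = √a a √a ≤ √a 1 √a = a`.
-/

section CStarAlgebra

variable {A : Type*} [CStarAlgebra A] [PartialOrder A] [StarOrderedRing A]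

theorem CStarAlgebra.mul_self_le_self_of_nonneg_of_norm_le_one {a : A} (ha : 0 ≤ a)
    (ha1 : ‖a‖ ≤ 1) : a * a ≤ a := by
  set s := CFC.sqrt a
  have hs : s * s = a := CFC.sqrt_mul_sqrt_self a ha
  have hs_star : star s = s := (IsSelfAdjoint.of_nonneg (CFC.sqrt_nonneg a)).star_eq
  calc a * a = star s * a * s := by rw [hs_star, ← hs]; noncomm_ring
    _ ≤ star s * 1 * s :=
      star_left_conjugate_le_conjugate ((norm_le_one_iff_of_nonneg a ha).mp ha1) s
    _ = a := by rw [hs_star, mul_one, hs]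

theorem CStarAlgebra.mul_add_mul_add_inv_four_nonneg {a b : A} (ha : 0 ≤ a) (hb : 0 ≤ b)
    (ha1 : ‖a‖ ≤ 1) (hb1 : ‖b‖ ≤ 1) : 0 ≤ a * b + b * a + (4 : ℂ)⁻¹ • 1 := by
  set c : A := a + b - (2 : ℂ)⁻¹ • 1 with hc_def
  have hc : IsSelfAdjoint c :=
    ((IsSelfAdjoint.of_nonneg ha).add (IsSelfAdjoint.of_nonneg hb)).sub
      (.smul (by simp [isSelfAdjoint_iff]) (.one A))
  have hsq : a * b + b * a + (4 : ℂ)⁻¹ • 1 = c * c + (a - a * a) + (b - b * b) := by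
    rw [hc_def, show (4 : ℂ)⁻¹ = 2⁻¹ * 2⁻¹ by norm_num, ← smul_smul]
    noncomm_ring
    module
  rw [hsq]
  have ha2 := sub_nonneg.mpr (mul_self_le_self_of_nonneg_of_norm_le_one ha ha1)
  have hb2 := sub_nonneg.mpr (mul_self_le_self_of_nonneg_of_norm_le_one hb hb1)
  exact add_nonneg (add_nonneg hc.mul_self_nonneg ha2) hb2

end CStarAlgebra

theorem stmt0 {H : Type*} [NormedAddCommGroup H] [InnerProductSpace ℂ H]
    [CompleteSpace H] (A B : H →L[ℂ] H)
    (hA : A.IsPositive) (hB : B.IsPositive) (hA1 : ‖A‖ ≤ 1) (hB1 : ‖B‖ ≤ 1) :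
    (A * B + B * A + (4 : ℂ)⁻¹ • 1).IsPositive := by
  simp only [← ContinuousLinearMap.nonneg_iff_isPositive] at hA hB ⊢
  exact CStarAlgebra.mul_add_mul_add_inv_four_nonneg hA hB hA1 hB1
end

section
/- If A and B are positive semidefinite contractions on a complex Hilbert space, then the commutator satisfies ‖AB - BA‖ ≤ 1/2. -/
/-! Shifting `A` and `B` by the scalar `1/2` does not change their commutator, and for a positive
contraction `a` the spectrum of `a - 1/2` lies in `[-1/2, 1/2]`, so `‖a - 1/2‖ ≤ 1/2`. Hence
`‖AB - BA‖ ≤ 2 ‖A - 1/2‖ ‖B - 1/2‖ ≤ 1/2`. -/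

theorem commutator_sub_algebraMap {R A : Type*} [CommSemiring R] [Ring A] [Algebra R A]
    (a b : A) (r s : R) :
    (a - algebraMap R A r) * (b - algebraMap R A s) -
      (b - algebraMap R A s) * (a - algebraMap R A r) = a * b - b * a := by
  noncomm_ring [Algebra.commutes r b, Algebra.commutes s a, Algebra.commutes r (algebraMap R A s)]

theorem norm_commutator_le_two_mul_norm_sub_algebraMap {R A : Type*} [CommSemiring R]
    [NormedRing A] [Algebra R A] (a b : A) (r s : R) :
    ‖a * b - b * a‖ ≤ 2 * (‖a - algebraMap R A r‖ * ‖b - algebraMap R A s‖) := by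
  rw [← commutator_sub_algebraMap a b r s]
  set a' := a - algebraMap R A r
  set b' := b - algebraMap R A s
  calc ‖a' * b' - b' * a'‖ ≤ ‖a'‖ * ‖b'‖ + ‖b'‖ * ‖a'‖ :=
      (norm_sub_le _ _).trans (add_le_add (norm_mul_le _ _) (norm_mul_le _ _))
    _ = 2 * (‖a'‖ * ‖b'‖) := by ring

theorem CStarAlgebra.norm_sub_algebraMap_half_le {A : Type*} [CStarAlgebra A] [PartialOrder A]
    [StarOrderedRing A] {a : A} (ha : 0 ≤ a) (ha1 : ‖a‖ ≤ 1) :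
    ‖a - algebraMap ℝ A (1 / 2)‖ ≤ 1 / 2 := by
  obtain _ | _ := subsingleton_or_nontrivial A
  · rw [Subsingleton.elim (a - algebraMap ℝ A (1 / 2)) 0, norm_zero]
    norm_num
  rw [← cfc_id' ℝ a, ← cfc_const (1 / 2 : ℝ) a, ← cfc_sub (fun x => x) (fun _ => 1 / 2) a]
  refine norm_cfc_le (by norm_num) fun x hx => ?_
  have hx0 : 0 ≤ x := spectrum_nonneg_of_nonneg ha hx
  have hx1 : x ≤ 1 := (Real.le_norm_self x).trans ((spectrum.norm_le_norm_of_mem hx).trans ha1)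
  rw [Real.norm_eq_abs, abs_le]
  constructor <;> linarith

theorem stmt2 {H : Type*} [NormedAddCommGroup H] [InnerProductSpace ℂ H]
    [CompleteSpace H] (A B : H →L[ℂ] H)
    (hA : A.IsPositive) (hB : B.IsPositive) (hA1 : ‖A‖ ≤ 1) (hB1 : ‖B‖ ≤ 1) :
    ‖A * B - B * A‖ ≤ 1 / 2 := by
  have hA' := CStarAlgebra.norm_sub_algebraMap_half_le (A.nonneg_iff_isPositive.mpr hA) hA1
  have hB' := CStarAlgebra.norm_sub_algebraMap_half_le (B.nonneg_iff_isPositive.mpr hB) hB1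
  refine (norm_commutator_le_two_mul_norm_sub_algebraMap A B (1 / 2 : ℝ) (1 / 2)).trans ?_
  calc 2 * (‖A - _‖ * ‖B - _‖) ≤ 2 * (1 / 2 * (1 / 2)) := by gcongr
    _ = 1 / 2 := by norm_num
end

section
/- If A and B are positive semidefinite contractions on a complex Hilbert space, then every element z = x + iy of the numerical range W(AB) satisfies -1/8 ≤ x ≤ 1 and -1/4 ≤ y ≤ 1/4. -/
/-!
For a positive contraction `T` one has `T² ≤ T`, i.e. `‖T x‖² ≤ re ⟪x, T x⟫`. Writing
`⟪x, A B x⟫ = ⟪A x, B x⟫ = ⟪u, v⟫`, both `u` and `v` therefore satisfy `‖w‖² ≤ re ⟪x, w⟫`,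
i.e. lie in the closed ball of radius `1/2` around `x / 2`, and `⟪x, u⟫`, `⟪x, v⟫` are real.
The three bounds are then plane geometry: `re ⟪u, v⟫ ≤ ‖u‖ ‖v‖ ≤ 1`;
`2 re ⟪u, v⟫ = ‖u + v‖² - ‖u‖² - ‖v‖² ≥ ‖u + v‖² - ‖u + v‖ ≥ -1/4`; and shifting both vectors
by `x / 2` does not change `im ⟪u, v⟫`, which is then at most `1/2 · 1/2` in absolute value.
-/

open scoped InnerProductSpace

section

open RCLike

variable {𝕜 E : Type*} [RCLike 𝕜] [NormedAddCommGroup E] [InnerProductSpace 𝕜 E]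

-- Expand `0 ≤ re ⟪y, T y⟫` at `y = x - T x`.
theorem ContinuousLinearMap.IsPositive.norm_apply_sq_le_re_inner {T : E →L[𝕜] E}
    (hT : T.IsPositive) (hT1 : ‖T‖ ≤ 1) (x : E) : ‖T x‖ ^ 2 ≤ re ⟪x, T x⟫_𝕜 := by
  have hpos : 0 ≤ re ⟪x - T x, T (x - T x)⟫_𝕜 := hT.re_inner_nonneg_right _
  have hsymm : ⟪x, T (T x)⟫_𝕜 = ⟪T x, T x⟫_𝕜 := (hT.inner_left_eq_inner_right x (T x)).symm
  have hTT : re ⟪T x, T (T x)⟫_𝕜 ≤ ‖T x‖ ^ 2 := calc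
    re ⟪T x, T (T x)⟫_𝕜 ≤ ‖T x‖ * ‖T (T x)‖ := re_inner_le_norm _ _
    _ ≤ ‖T x‖ * ‖T x‖ := by
      gcongr
      simpa using T.le_of_opNorm_le hT1 (T x)
    _ = ‖T x‖ ^ 2 := (sq _).symm
  have hexpand : re ⟪x - T x, T (x - T x)⟫_𝕜
      = re ⟪x, T x⟫_𝕜 - 2 * ‖T x‖ ^ 2 + re ⟪T x, T (T x)⟫_𝕜 := by
    simp only [map_sub, inner_sub_left, inner_sub_right, hsymm, inner_self_eq_norm_sq]
    ring
  linarith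

variable {x u v : E}

theorem norm_le_of_norm_sq_le_re_inner (hu : ‖u‖ ^ 2 ≤ re ⟪x, u⟫_𝕜) : ‖u‖ ≤ ‖x‖ := by
  nlinarith [hu.trans (re_inner_le_norm x u), norm_nonneg u, norm_nonneg x]

theorem norm_sub_half_smul_le_of_norm_sq_le_re_inner (hu : ‖u‖ ^ 2 ≤ re ⟪x, u⟫_𝕜) :
    ‖u - (2⁻¹ : 𝕜) • x‖ ≤ ‖x‖ / 2 := by
  have hsq : ‖u - (2⁻¹ : 𝕜) • x‖ ^ 2 ≤ (‖x‖ / 2) ^ 2 := by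
    have hre : re ⟪u, (2⁻¹ : 𝕜) • x⟫_𝕜 = 2⁻¹ * re ⟪x, u⟫_𝕜 := by
      simp [inner_smul_right, mul_re, inner_re_symm u x, inner_im_symm u x, normSq_apply]
    rw [norm_sub_sq (𝕜 := 𝕜), hre, norm_smul, norm_inv, norm_ofNat]
    linarith
  exact pow_le_pow_iff_left₀ (norm_nonneg _) (by positivity) two_ne_zero |>.mp hsq

theorem re_inner_le_norm_sq_of_norm_sq_le_re_inner (hu : ‖u‖ ^ 2 ≤ re ⟪x, u⟫_𝕜)
    (hv : ‖v‖ ^ 2 ≤ re ⟪x, v⟫_𝕜) : re ⟪u, v⟫_𝕜 ≤ ‖x‖ ^ 2 := calc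
  re ⟪u, v⟫_𝕜 ≤ ‖u‖ * ‖v‖ := re_inner_le_norm u v
  _ ≤ ‖x‖ * ‖x‖ := mul_le_mul (norm_le_of_norm_sq_le_re_inner hu)
    (norm_le_of_norm_sq_le_re_inner hv) (norm_nonneg _) (norm_nonneg _)
  _ = ‖x‖ ^ 2 := (sq _).symm

theorem neg_norm_sq_div_eight_le_re_inner_of_norm_sq_le_re_inner
    (hu : ‖u‖ ^ 2 ≤ re ⟪x, u⟫_𝕜) (hv : ‖v‖ ^ 2 ≤ re ⟪x, v⟫_𝕜) :
    -(‖x‖ ^ 2 / 8) ≤ re ⟪u, v⟫_𝕜 := by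
  have hsum : re ⟪x, u⟫_𝕜 + re ⟪x, v⟫_𝕜 ≤ ‖x‖ * ‖u + v‖ := by
    simpa only [inner_add_right, map_add] using re_inner_le_norm (𝕜 := 𝕜) x (u + v)
  nlinarith [norm_add_sq (𝕜 := 𝕜) u v, sq_nonneg (‖u + v‖ - ‖x‖ / 2)]

theorem abs_im_inner_le_norm_sq_div_four_of_norm_sq_le_re_inner
    (hu : ‖u‖ ^ 2 ≤ re ⟪x, u⟫_𝕜) (hv : ‖v‖ ^ 2 ≤ re ⟪x, v⟫_𝕜)
    (hxu : im ⟪x, u⟫_𝕜 = 0) (hxv : im ⟪x, v⟫_𝕜 = 0) : |im ⟪u, v⟫_𝕜| ≤ ‖x‖ ^ 2 / 4 := by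
  have him : im ⟪u - (2⁻¹ : 𝕜) • x, v - (2⁻¹ : 𝕜) • x⟫_𝕜 = im ⟪u, v⟫_𝕜 := by
    simp [inner_sub_left, inner_sub_right, inner_smul_left, inner_smul_right, inner_im_symm u x,
      hxu, hxv]
  calc |im ⟪u, v⟫_𝕜| = |im ⟪u - (2⁻¹ : 𝕜) • x, v - (2⁻¹ : 𝕜) • x⟫_𝕜| := by rw [him]
    _ ≤ ‖⟪u - (2⁻¹ : 𝕜) • x, v - (2⁻¹ : 𝕜) • x⟫_𝕜‖ := abs_im_le_norm _
    _ ≤ ‖u - (2⁻¹ : 𝕜) • x‖ * ‖v - (2⁻¹ : 𝕜) • x‖ := norm_inner_le_norm _ _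
    _ ≤ ‖x‖ / 2 * (‖x‖ / 2) := mul_le_mul (norm_sub_half_smul_le_of_norm_sq_le_re_inner hu)
        (norm_sub_half_smul_le_of_norm_sq_le_re_inner hv) (norm_nonneg _) (by positivity)
    _ = ‖x‖ ^ 2 / 4 := by ring

end

theorem stmt4_general {H : Type*} [NormedAddCommGroup H] [InnerProductSpace ℂ H]
    (A B : H →L[ℂ] H)
    (hA : A.IsPositive) (hB : B.IsPositive) (hA1 : ‖A‖ ≤ 1) (hB1 : ‖B‖ ≤ 1) :
    ∀ x : H, ‖x‖ = 1 →
      -(1 / 8) ≤ (inner ℂ x ((A * B) x) : ℂ).re ∧ (inner ℂ x ((A * B) x) : ℂ).re ≤ 1 ∧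
      -(1 / 4) ≤ (inner ℂ x ((A * B) x) : ℂ).im ∧ (inner ℂ x ((A * B) x) : ℂ).im ≤ 1 / 4 := by
  intro x hx
  have hAB : inner ℂ x ((A * B) x) = ⟪A x, B x⟫_ℂ :=
    (hA.inner_left_eq_inner_right x (B x)).symm
  have hAx := hA.norm_apply_sq_le_re_inner hA1 x
  have hBx := hB.norm_apply_sq_le_re_inner hB1 x
  have hre_lower := neg_norm_sq_div_eight_le_re_inner_of_norm_sq_le_re_inner hAx hBx
  have hre_upper := re_inner_le_norm_sq_of_norm_sq_le_re_inner hAx hBx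
  have him := abs_le.mp <| abs_im_inner_le_norm_sq_div_four_of_norm_sq_le_re_inner hAx hBx
    (hA.isSymmetric.im_inner_self_apply x) (hB.isSymmetric.im_inner_self_apply x)
  simp only [RCLike.re_to_complex, RCLike.im_to_complex, hx, one_pow] at hre_lower hre_upper him
  rw [hAB]
  exact ⟨hre_lower, hre_upper, him⟩

theorem stmt4 {H : Type*} [NormedAddCommGroup H] [InnerProductSpace ℂ H]
    [CompleteSpace H] (A B : H →L[ℂ] H)
    (hA : A.IsPositive) (hB : B.IsPositive) (hA1 : ‖A‖ ≤ 1) (hB1 : ‖B‖ ≤ 1) :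
    ∀ x : H, ‖x‖ = 1 →
      -(1 / 8) ≤ (inner ℂ x ((A * B) x) : ℂ).re ∧ (inner ℂ x ((A * B) x) : ℂ).re ≤ 1 ∧
      -(1 / 4) ≤ (inner ℂ x ((A * B) x) : ℂ).im ∧ (inner ℂ x ((A * B) x) : ℂ).im ≤ 1 / 4 :=
  stmt4_general A B hA hB hA1 hB1
end

section
/- For A ∈ Mₙ(ℂ), the numerical range W(A) is a (possibly degenerate) line segment in ℂ if and only if A is normal and all its eigenvalues lie on a common straight line. -/
/-! Each side is equivalent to `A = α • H + β • 1` for some `α ≠ 0` and some Hermitian `H`.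
Under `A ↦ α • A + β • 1` the numerical range and the spectrum both move by `z ↦ α * z + β`,
so a line through `W(A)` or through the spectrum of `A` pulls back to `ℝ` for `H`.
A quadratic form that is real on the unit sphere is Hermitian, and a normal matrix with real
spectrum is Hermitian by the continuous functional calculus. Conversely, `W(H)` is a compact
connected subset of `ℝ` (the image of the unit sphere of `ℂⁿ`, `n ≥ 1`), hence an interval,
and its image under `z ↦ α * z + β` is a segment. -/

open Matrix Set WithLp
open scoped InnerProductSpace

theorem LinearMap.isSymmetric_of_forall_mem_sphere {V : Type*} [NormedAddCommGroup V]
    [InnerProductSpace ℂ V] (T : V →ₗ[ℂ] V)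
    (h : ∀ v ∈ Metric.sphere (0 : V) 1, ⟪v, T v⟫_ℂ ∈ Set.range Complex.ofReal) :
    T.IsSymmetric := by
  rw [isSymmetric_iff_inner_map_self_real]
  intro v
  suffices hreal : ∃ r : ℝ, ⟪v, T v⟫_ℂ = r by
    obtain ⟨r, hr⟩ := hreal
    rw [inner_conj_symm, hr, ← inner_conj_symm, hr, Complex.conj_ofReal]
  rcases eq_or_ne v 0 with rfl | hv
  · exact ⟨0, by simp⟩
  set u := (‖v‖⁻¹ : ℂ) • v
  obtain ⟨r, hr⟩ := h u (by simp [u, norm_smul, hv])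
  have hvu : v = (‖v‖ : ℂ) • u := by
    rw [smul_smul, mul_inv_cancel₀ (by simpa using hv), one_smul]
  refine ⟨‖v‖ ^ 2 * r, ?_⟩
  conv_lhs => rw [hvu]
  rw [map_smul, inner_smul_left, inner_smul_right, ← hr, Complex.conj_ofReal]
  push_cast
  ring

theorem collinear_segment {𝕜 E : Type*} [Field 𝕜] [LinearOrder 𝕜] [IsStrictOrderedRing 𝕜]
    [AddCommGroup E] [Module 𝕜 E] (x y : E) : Collinear 𝕜 (segment 𝕜 x y) := by
  rw [collinear_iff_exists_forall_eq_smul_vadd, segment_eq_image']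
  refine ⟨x, y - x, ?_⟩
  rintro _ ⟨t, -, rfl⟩
  exact ⟨t, by rw [vadd_eq_add, add_comm]⟩

theorem spectrum_smul_add_smul_one {𝕜 A : Type*} [Field 𝕜] [Ring A] [Algebra 𝕜 A] {α : 𝕜}
    (hα : α ≠ 0) (a : A) (β : 𝕜) :
    spectrum 𝕜 (α • a + β • 1) = (fun z => α * z + β) '' spectrum 𝕜 a := by
  rw [← Algebra.algebraMap_eq_smul_one, ← spectrum.add_singleton_eq, ← Units.smul_mk0 hα,
    spectrum.unit_smul_eq_smul, add_singleton, ← image_smul, image_image]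
  rfl

theorem IsStarNormal.smul_add_smul_one {R A : Type*} [CommSemiring R] [StarRing R] [Ring A]
    [StarRing A] [Algebra R A] [StarModule R A] {a : A} [IsStarNormal a] (α β : R) :
    IsStarNormal (α • a + β • 1) := by
  have h : Commute (α • a) (star (β • 1)) := by
    rw [star_smul, star_one]
    exact (Commute.one_right _).smul_right _
  exact h.isStarNormal_add

namespace Complex

theorem mul_add_injective {α : ℂ} (hα : α ≠ 0) (β : ℂ) :
    Function.Injective fun z => α * z + β :=
  (add_left_injective β).comp (mul_right_injective₀ hα)

theorem image_mul_add_segment (α β z₁ z₂ : ℂ) :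
    (fun z => α * z + β) '' segment ℝ z₁ z₂ = segment ℝ (α * z₁ + β) (α * z₂ + β) :=
  image_segment ℝ ((LinearMap.mulLeft ℝ α).toAffineMap + AffineMap.const ℝ ℂ β) z₁ z₂

theorem collinear_iff_exists_subset_image_range_ofReal (S : Set ℂ) :
    Collinear ℝ S ↔ ∃ α β : ℂ, α ≠ 0 ∧ S ⊆ (fun z => α * z + β) '' range ofReal := by
  rw [collinear_iff_exists_forall_eq_smul_vadd]
  constructor
  · rintro ⟨β, v, h⟩
    rcases eq_or_ne v 0 with rfl | hv
    · refine ⟨1, β, one_ne_zero, fun z hz => ⟨0, mem_range_self 0, ?_⟩⟩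
      obtain ⟨r, rfl⟩ := h z hz
      simp
    · refine ⟨v, β, hv, fun z hz => ?_⟩
      obtain ⟨r, rfl⟩ := h z hz
      exact ⟨r, mem_range_self r, by simp [real_smul, mul_comm]⟩
  · rintro ⟨α, β, -, h⟩
    refine ⟨β, α, fun z hz => ?_⟩
    obtain ⟨_, ⟨r, rfl⟩, rfl⟩ := h hz
    exact ⟨r, by simp [real_smul, mul_comm]⟩

theorem exists_eq_segment_of_subset_range_ofReal {S : Set ℂ} (hS : S ⊆ range ofReal)
    (hconn : IsConnected S) (hcpt : IsCompact S) : ∃ z₁ z₂ : ℂ, S = segment ℝ z₁ z₂ := by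
  set T := re '' S
  have hTconn : IsConnected T := hconn.image _ continuous_re.continuousOn
  have hTcpt : IsCompact T := hcpt.image continuous_re
  have hST : S = ofReal '' T := by
    rw [image_image]
    refine (image_id' S).symm.trans (image_congr fun z hz => ?_).symm
    obtain ⟨r, rfl⟩ := hS hz
    rfl
  obtain ⟨a, b, hab, hT⟩ : ∃ a b : ℝ, a ≤ b ∧ T = Icc a b :=
    ⟨_, _, csInf_le_csSup hTconn.nonempty hTcpt.bddBelow hTcpt.bddAbove,
      eq_Icc_of_connected_compact hTconn hTcpt⟩
  refine ⟨a, b, ?_⟩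
  rw [hST, hT, ← segment_eq_Icc hab]
  exact image_segment ℝ ofRealCLM.toLinearMap.toAffineMap _ _

end Complex

namespace Matrix

variable {ι : Type*} [Fintype ι]

def numericalRange (A : Matrix ι ι ℂ) : Set ℂ :=
  {z | ∃ x : ι → ℂ, star x ⬝ᵥ x = 1 ∧ star x ⬝ᵥ (A *ᵥ x) = z}

theorem isStarNormal_iff_mul_conjTranspose_comm (A : Matrix ι ι ℂ) :
    IsStarNormal A ↔ A * Aᴴ = Aᴴ * A :=
  ⟨fun h => h.star_comm_self.symm, fun h => ⟨h.symm⟩⟩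

variable [DecidableEq ι]

theorem numericalRange_smul_add_smul_one (A : Matrix ι ι ℂ) (α β : ℂ) :
    numericalRange (α • A + β • 1) = (fun z => α * z + β) '' numericalRange A := by
  ext z
  simp only [numericalRange, mem_ofPred_eq, mem_image]
  constructor
  · rintro ⟨x, hx, rfl⟩
    exact ⟨_, ⟨x, hx, rfl⟩, by simp [add_mulVec, smul_mulVec, dotProduct_add, hx]⟩
  · rintro ⟨_, ⟨x, hx, rfl⟩, rfl⟩
    exact ⟨x, hx, by simp [add_mulVec, smul_mulVec, dotProduct_add, hx]⟩

theorem inner_toEuclideanLin (A : Matrix ι ι ℂ) (v : EuclideanSpace ℂ ι) :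
    ⟪v, A.toEuclideanLin v⟫_ℂ = star (ofLp v) ⬝ᵥ (A *ᵥ ofLp v) := by
  rw [EuclideanSpace.inner_eq_star_dotProduct, ofLp_toLpLin, dotProduct_comm]
  rfl

theorem numericalRange_eq_image_sphere (A : Matrix ι ι ℂ) :
    numericalRange A =
      (fun v : EuclideanSpace ℂ ι => ⟪v, A.toEuclideanLin v⟫_ℂ) '' Metric.sphere 0 1 := by
  have hsphere (v : EuclideanSpace ℂ ι) :
      v ∈ Metric.sphere 0 1 ↔ star (ofLp v) ⬝ᵥ ofLp v = 1 := by
    have hinner : ⟪v, v⟫_ℂ = star (ofLp v) ⬝ᵥ ofLp v := by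
      simpa using inner_toEuclideanLin 1 v
    rw [mem_sphere_zero_iff_norm, ← hinner, inner_self_eq_norm_sq_to_K, ← RCLike.ofReal_pow,
      RCLike.ofReal_injective.eq_iff' RCLike.ofReal_one,
      pow_eq_one_iff_of_nonneg (norm_nonneg v) two_ne_zero]
  ext z
  constructor
  · rintro ⟨x, hx, rfl⟩
    exact ⟨toLp 2 x, (hsphere _).2 hx, inner_toEuclideanLin A _⟩
  · rintro ⟨v, hv, rfl⟩
    exact ⟨ofLp v, (hsphere v).1 hv, (inner_toEuclideanLin A v).symm⟩

theorem isCompact_numericalRange (A : Matrix ι ι ℂ) : IsCompact (numericalRange A) := by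
  rw [numericalRange_eq_image_sphere]
  exact (isCompact_sphere 0 1).image
    (continuous_id.inner (LinearMap.continuous_of_finiteDimensional _))

theorem isConnected_numericalRange [Nonempty ι] (A : Matrix ι ι ℂ) :
    IsConnected (numericalRange A) := by
  have hrank : 1 < Module.rank ℝ (EuclideanSpace ℂ ι) := by
    rw [← Module.finrank_eq_rank, finrank_real_of_complex, finrank_euclideanSpace]
    norm_cast
    have := Fintype.card_pos (α := ι)
    omega
  rw [numericalRange_eq_image_sphere]
  exact (isConnected_sphere hrank 0 zero_le_one).image _
    (continuous_id.inner (LinearMap.continuous_of_finiteDimensional _)).continuousOn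

theorem numericalRange_subset_range_ofReal_iff (A : Matrix ι ι ℂ) :
    numericalRange A ⊆ range Complex.ofReal ↔ A.IsHermitian := by
  constructor
  · intro h
    rw [← isSymmetric_toEuclideanLin_iff]
    refine LinearMap.isSymmetric_of_forall_mem_sphere _ fun v hv => h ?_
    rw [numericalRange_eq_image_sphere]
    exact mem_image_of_mem _ hv
  · rintro hA _ ⟨x, -, rfl⟩
    exact ⟨_, Complex.ext rfl (hA.im_star_dotProduct_mulVec_self x).symm⟩

theorem IsHermitian.exists_numericalRange_eq_segment [Nonempty ι] {H : Matrix ι ι ℂ}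
    (hH : H.IsHermitian) : ∃ z₁ z₂ : ℂ, numericalRange H = segment ℝ z₁ z₂ :=
  Complex.exists_eq_segment_of_subset_range_ofReal
    ((numericalRange_subset_range_ofReal_iff H).2 hH)
    (isConnected_numericalRange H) (isCompact_numericalRange H)

open scoped Matrix.Norms.L2Operator in
theorem isHermitian_iff_isStarNormal_and_spectrum_subset (A : Matrix ι ι ℂ) :
    A.IsHermitian ↔ IsStarNormal A ∧ spectrum ℂ A ⊆ range Complex.ofReal := by
  rw [isHermitian_iff_isSelfAdjoint]
  constructor
  · intro hA
    refine ⟨hA.isStarNormal, fun z hz => ⟨z.re, ?_⟩⟩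
    exact (SpectrumRestricts.real_iff.mp hA.spectrumRestricts z hz).symm
  · rintro ⟨hA, h⟩
    refine QuasispectrumRestricts.isSelfAdjoint A
      (SpectrumRestricts.real_iff.mpr fun z hz => ?_)
    obtain ⟨r, rfl⟩ := h hz
    simp

theorem exists_numericalRange_eq_segment_iff [Nonempty ι] (A : Matrix ι ι ℂ) :
    (∃ z₁ z₂ : ℂ, numericalRange A = segment ℝ z₁ z₂) ↔
      ∃ α β : ℂ, α ≠ 0 ∧ (α⁻¹ • (A - β • 1)).IsHermitian := by
  constructor
  · rintro ⟨z₁, z₂, hW⟩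
    obtain ⟨α, β, hα, hline⟩ := (Complex.collinear_iff_exists_subset_image_range_ofReal _).1
      (hW ▸ collinear_segment z₁ z₂)
    refine ⟨α, β, hα, (numericalRange_subset_range_ofReal_iff _).1 ?_⟩
    rwa [← image_subset_image_iff (Complex.mul_add_injective hα β),
      ← numericalRange_smul_add_smul_one, smul_inv_smul₀ hα, sub_add_cancel]
  · rintro ⟨α, β, hα, hH⟩
    obtain ⟨z₁, z₂, hW⟩ := hH.exists_numericalRange_eq_segment
    refine ⟨α * z₁ + β, α * z₂ + β, ?_⟩
    rw [← Complex.image_mul_add_segment, ← hW, ← numericalRange_smul_add_smul_one,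
      smul_inv_smul₀ hα, sub_add_cancel]

theorem isStarNormal_and_collinear_spectrum_iff (A : Matrix ι ι ℂ) :
    IsStarNormal A ∧ Collinear ℝ (spectrum ℂ A) ↔
      ∃ α β : ℂ, α ≠ 0 ∧ (α⁻¹ • (A - β • 1)).IsHermitian := by
  constructor
  · rintro ⟨hA, hcol⟩
    obtain ⟨α, β, hα, hline⟩ := (Complex.collinear_iff_exists_subset_image_range_ofReal _).1 hcol
    have hexpand : α⁻¹ • (A - β • 1) = α⁻¹ • A + (-(α⁻¹ * β)) • 1 := by module
    refine ⟨α, β, hα, (isHermitian_iff_isStarNormal_and_spectrum_subset _).2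
      ⟨hexpand ▸ IsStarNormal.smul_add_smul_one _ _, ?_⟩⟩
    rwa [← image_subset_image_iff (Complex.mul_add_injective hα β),
      ← spectrum_smul_add_smul_one hα, smul_inv_smul₀ hα, sub_add_cancel]
  · rintro ⟨α, β, hα, hH⟩
    have hA : A = α • (α⁻¹ • (A - β • 1)) + β • 1 := by rw [smul_inv_smul₀ hα, sub_add_cancel]
    generalize α⁻¹ • (A - β • 1) = H at hA hH
    subst hA
    obtain ⟨_, hreal⟩ := (isHermitian_iff_isStarNormal_and_spectrum_subset H).1 hH
    refine ⟨IsStarNormal.smul_add_smul_one _ _, ?_⟩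
    rw [Complex.collinear_iff_exists_subset_image_range_ofReal]
    exact ⟨α, β, hα, by rw [spectrum_smul_add_smul_one hα]; exact image_mono hreal⟩

end Matrix

theorem stmt9 {n : ℕ} (hn : 0 < n) (A : Matrix (Fin n) (Fin n) ℂ) :
    (∃ z₁ z₂ : ℂ,
      {z : ℂ | ∃ x : Fin n → ℂ, star x ⬝ᵥ x = 1 ∧ star x ⬝ᵥ (A *ᵥ x) = z} = segment ℝ z₁ z₂)
    ↔ (A * Aᴴ = Aᴴ * A ∧ Collinear ℝ (spectrum ℂ A)) := by
  have : Nonempty (Fin n) := ⟨⟨0, hn⟩⟩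
  rw [← isStarNormal_iff_mul_conjTranspose_comm]
  exact (exists_numericalRange_eq_segment_iff A).trans
    (isStarNormal_and_collinear_spectrum_iff A).symm
end

section
/- Let A, B ∈ Mₙ(ℂ) be positive semidefinite contractions, and set T = [[AB, 0, A√(B-B²)], [√(A-A²)B, 0, √((A-A²))·√(B-B²)], [0, 0, 0]] ∈ M_{3n}(ℂ), arising as the compression product of the projection dilations of A and B. Then W(AB) ⊆ W(T) and σ(T) = σ(AB) ∪ {0}. -/
open Matrix ComplexOrder

/-- The positive semidefinite square root of a positive semidefinite matrix
(the definition `Matrix.PosSemidef.sqrt` of the older Mathlib, since removed). -/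
noncomputable def Matrix.PosSemidef.sqrt {n 𝕜 : Type*} [Fintype n] [RCLike 𝕜] [DecidableEq n]
    {A : Matrix n n 𝕜} (hA : A.PosSemidef) : Matrix n n 𝕜 :=
  hA.1.eigenvectorUnitary.1 * diagonal ((↑) ∘ (√·) ∘ hA.1.eigenvalues) *
  (star hA.1.eigenvectorUnitary : Matrix n n 𝕜)

/-! `T` is block upper triangular with the compression `A * B` in its top-left corner and zero
diagonal blocks elsewhere: the quadratic form of `T` restricted to the first summand is that of
`A * B`, and the characteristic polynomial of `T` is that of `A * B` times a power of `X`. -/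

namespace Matrix

section Spectrum

variable {K m l : Type*} [Field K] [Fintype m] [DecidableEq m] [Fintype l] [DecidableEq l]

theorem spectrum_fromBlocks_zero₂₁ (A : Matrix m m K) (B : Matrix m l K) (D : Matrix l l K) :
    spectrum K (fromBlocks A B 0 D) = spectrum K A ∪ spectrum K D := by
  ext μ
  simp only [Set.mem_union, mem_spectrum_iff_isRoot_charpoly, charpoly_fromBlocks_zero₂₁,
    Polynomial.IsRoot.def, Polynomial.eval_mul, mul_eq_zero]

theorem spectrum_fromBlocks_zero₁₂ (A : Matrix m m K) (C : Matrix l m K) (D : Matrix l l K) :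
    spectrum K (fromBlocks A 0 C D) = spectrum K A ∪ spectrum K D := by
  ext μ
  simp only [Set.mem_union, mem_spectrum_iff_isRoot_charpoly, charpoly_fromBlocks_zero₁₂,
    Polynomial.IsRoot.def, Polynomial.eval_mul, mul_eq_zero]

end Spectrum

section QuadraticForm

variable {R m l : Type*} [CommSemiring R] [StarRing R] [Fintype m] [Fintype l]

theorem star_sumElim_zero_dotProduct_sumElim_zero (x : m → R) :
    star (Sum.elim x (0 : l → R)) ⬝ᵥ Sum.elim x 0 = star x ⬝ᵥ x := by
  simp [Function.star_sumElim, sumElim_dotProduct_sumElim]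

theorem star_sumElim_zero_dotProduct_fromBlocks_mulVec (x : m → R) (P : Matrix m m R)
    (Q : Matrix m l R) (C : Matrix l m R) (D : Matrix l l R) :
    star (Sum.elim x 0) ⬝ᵥ (fromBlocks P Q C D *ᵥ Sum.elim x 0) = star x ⬝ᵥ (P *ᵥ x) := by
  simp [Function.star_sumElim, fromBlocks_mulVec, sumElim_dotProduct_sumElim]

end QuadraticForm

end Matrix

theorem stmt14_general {n : ℕ} (hn : 0 < n) (A B : Matrix (Fin n) (Fin n) ℂ)
    (hSA : (A - A * A).PosSemidef) (hSB : (B - B * B).PosSemidef)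
    (T : Matrix ((Fin n ⊕ Fin n) ⊕ Fin n) ((Fin n ⊕ Fin n) ⊕ Fin n) ℂ)
    (hT : T = Matrix.fromBlocks
      (Matrix.fromBlocks (A * B) 0 (hSA.sqrt * B) 0)
      (Matrix.fromRows (A * hSB.sqrt) (hSA.sqrt * hSB.sqrt)) 0 0) :
    ({z : ℂ | ∃ x : Fin n → ℂ, star x ⬝ᵥ x = 1 ∧ star x ⬝ᵥ ((A * B) *ᵥ x) = z} ⊆
      {z : ℂ | ∃ y : (Fin n ⊕ Fin n) ⊕ Fin n → ℂ, star y ⬝ᵥ y = 1 ∧ star y ⬝ᵥ (T *ᵥ y) = z}) ∧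
    spectrum ℂ T = spectrum ℂ (A * B) ∪ {0} := by
  subst hT
  refine ⟨?_, ?_⟩
  · rintro z ⟨x, hx, rfl⟩
    refine ⟨Sum.elim (Sum.elim x 0) 0, ?_, ?_⟩
    · rw [star_sumElim_zero_dotProduct_sumElim_zero, star_sumElim_zero_dotProduct_sumElim_zero, hx]
    · rw [star_sumElim_zero_dotProduct_fromBlocks_mulVec,
        star_sumElim_zero_dotProduct_fromBlocks_mulVec]
  · have : Nonempty (Fin n) := ⟨⟨0, hn⟩⟩
    rw [spectrum_fromBlocks_zero₂₁, spectrum_fromBlocks_zero₁₂, spectrum.zero_eq,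
      Set.union_assoc, Set.union_self]

theorem stmt14 {n : ℕ} (hn : 0 < n) (A B : Matrix (Fin n) (Fin n) ℂ)
    (hA : A.PosSemidef) (hB : B.PosSemidef)
    (hA1 : (1 - A).PosSemidef) (hB1 : (1 - B).PosSemidef)
    (hSA : (A - A * A).PosSemidef) (hSB : (B - B * B).PosSemidef)
    (T : Matrix ((Fin n ⊕ Fin n) ⊕ Fin n) ((Fin n ⊕ Fin n) ⊕ Fin n) ℂ)
    (hT : T = Matrix.fromBlocks
      (Matrix.fromBlocks (A * B) 0 (hSA.sqrt * B) 0)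
      (Matrix.fromRows (A * hSB.sqrt) (hSA.sqrt * hSB.sqrt)) 0 0) :
    ({z : ℂ | ∃ x : Fin n → ℂ, star x ⬝ᵥ x = 1 ∧ star x ⬝ᵥ ((A * B) *ᵥ x) = z} ⊆
      {z : ℂ | ∃ y : (Fin n ⊕ Fin n) ⊕ Fin n → ℂ, star y ⬝ᵥ y = 1 ∧ star y ⬝ᵥ (T *ᵥ y) = z}) ∧
    spectrum ℂ T = spectrum ℂ (A * B) ∪ {0} :=
  stmt14_general hn A B hSA hSB T hT
end
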